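/- arXiv:1208.0312 — 3 statements merged into one kernel-verified Lean document; each statement's English description precedes it below -/
import Mathlib

section
/- Let B = 2 and consider a unit-job multi-slot instance. Let ι* be the maximum cardinality of a schedulable subset of J, and let A* be the minimum active time over all schedules of subsets of cardinality ι*. Then the maximum, over all subsets J' ⊆ J and schedules σ of J', of the quantity |J'| + |S \ range(σ)| (number of scheduled jobs plus number of slots not used by σ) equals ι* + |S| − A*. -/
open Finset

/-- A schedule of the subset `J'` of unit jobs: each job of `J'` is assigned one of
its feasible slots, with at most `B` jobs of `J'` per slot. -/
def IsPartialSchedule {J S : Type*} [DecidableEq S]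
    (B : ℕ) (T : J → Finset S) (J' : Finset J) (σ : J → S) : Prop :=
  (∀ j ∈ J', σ j ∈ T j) ∧ ∀ s : S, (J'.filter (fun j => σ j = s)).card ≤ B

/-- A subset of jobs is schedulable if some schedule of it exists. -/
def Schedulable {J S : Type*} [DecidableEq S]
    (B : ℕ) (T : J → Finset S) (J' : Finset J) : Prop :=
  ∃ σ : J → S, IsPartialSchedule B T J' σ

/-!
For every capacity `B`, the schedulable sets of jobs are the independent sets of a transversal
matroid, and augmentation can be done economically: a schedule `σ` of `J'` can be extended to
one more job while opening at most one new slot, as long as a larger schedulable set exists.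
Walk along an alternating path: put a job `j` of the larger schedule `ρ` into its `ρ`-slot; if
that slot is full, evict a job there that disagrees with `ρ`. Evictions only use slots already
active under `σ`, and each one shrinks the set of jobs on which the schedule disagrees with `ρ`.
Augmenting `ι - |J'|` times yields a schedule of `ι` jobs with at most `|σ(J')| + ι - |J'|`
active slots, so `|J'| + |S \ σ(J')| ≤ ι + |S| - A`; a schedule attaining `A` gives equality.
-/

namespace IsPartialSchedule

variable {J S : Type*} [DecidableEq S] {B : ℕ} {T : J → Finset S}
  {K J' : Finset J} {ρ σ : J → S} {j k : J}

theorem mono {J'' : Finset J} (h : IsPartialSchedule B T J' σ) (hsub : J'' ⊆ J') :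
    IsPartialSchedule B T J'' σ :=
  ⟨fun j hj => h.1 j (hsub hj),
    fun s => (card_le_card (filter_subset_filter _ hsub)).trans (h.2 s)⟩

theorem insert_update [DecidableEq J] {s : S} (h : IsPartialSchedule B T J' σ) (hj : j ∉ J')
    (hs : s ∈ T j) (hload : (J'.filter (fun m => σ m = s)).card < B) :
    IsPartialSchedule B T (insert j J') (Function.update σ j s) := by
  have hagree : ∀ m ∈ J', Function.update σ j s m = σ m := fun m hm =>
    Function.update_of_ne (ne_of_mem_of_not_mem hm hj) _ _
  refine ⟨?_, fun s' => ?_⟩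
  · intro m hm
    rcases mem_insert.mp hm with rfl | hm
    · simpa using hs
    · simpa [hagree m hm] using h.1 m hm
  · rw [filter_insert, filter_congr fun m hm => by rw [hagree m hm], Function.update_self]
    split_ifs with hss
    · subst hss
      exact (card_insert_le _ _).trans hload
    · exact h.2 s'

theorem image_insert_update [DecidableEq J] (s : S) (hj : j ∉ J') :
    (insert j J').image (Function.update σ j s) = insert s (J'.image σ) := by
  rw [image_insert, Function.update_self]
  congr 1
  exact image_congr fun m hm => Function.update_of_ne (ne_of_mem_of_not_mem hm hj) _ _

theorem exchange [DecidableEq J] (h : IsPartialSchedule B T J' σ) (hk : k ∈ J') (hj : j ∉ J')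
    (hs : σ k ∈ T j) :
    IsPartialSchedule B T (insert j (J'.erase k)) (Function.update σ j (σ k)) := by
  refine (h.mono (erase_subset k J')).insert_update (fun hj' => hj (mem_of_mem_erase hj')) hs ?_
  have hk' : k ∈ J'.filter (fun m => σ m = σ k) := mem_filter.mpr ⟨hk, rfl⟩
  rw [filter_erase, card_erase_of_mem hk']
  have := card_pos.mpr ⟨k, hk'⟩
  have := h.2 (σ k)
  omega

theorem image_exchange_subset [DecidableEq J] (hk : k ∈ J') (hj : j ∉ J') :
    (insert j (J'.erase k)).image (Function.update σ j (σ k)) ⊆ J'.image σ := by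
  rw [image_insert_update _ fun hj' => hj (mem_of_mem_erase hj')]
  exact insert_subset (mem_image_of_mem σ hk) (image_subset_image (erase_subset k J'))

/-- `ρ` also puts `j ∉ J'` into the slot `ρ j`, so at most `B - 1` jobs of `J'` can sit there
in agreement with `ρ`. -/
theorem load_lt_or_exists_disagree (hρ : IsPartialSchedule B T K ρ) (hjK : j ∈ K)
    (hjJ' : j ∉ J') :
    (J'.filter (fun m => σ m = ρ j)).card < B ∨
      ∃ k ∈ J', σ k = ρ j ∧ ¬(k ∈ K ∧ σ k = ρ k) := by
  classical
  by_contra! hcon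
  obtain ⟨hfull, hagree⟩ := hcon
  have hj : j ∈ K.filter (fun m => ρ m = ρ j) := mem_filter.mpr ⟨hjK, rfl⟩
  have hsub : J'.filter (fun m => σ m = ρ j) ⊆ (K.filter (fun m => ρ m = ρ j)).erase j := by
    intro m hm
    obtain ⟨hmJ', hmj⟩ := mem_filter.mp hm
    obtain ⟨hmK, hmρ⟩ := hagree m hmJ' hmj
    exact mem_erase.mpr ⟨ne_of_mem_of_not_mem hmJ' hjJ', mem_filter.mpr ⟨hmK, hmρ ▸ hmj⟩⟩
  have := card_le_card hsub
  rw [card_erase_of_mem hj] at this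
  have := card_pos.mpr ⟨j, hj⟩
  have := hρ.2 (ρ j)
  omega

/-- The induction runs on the number of jobs on which `σ` disagrees with `ρ`, which every
eviction decreases. -/
theorem exists_augment (hρ : IsPartialSchedule B T K ρ) (hσ : IsPartialSchedule B T J' σ)
    (hcard : J'.card < K.card) :
    ∃ (J'' : Finset J) (σ'' : J → S), J''.card = J'.card + 1 ∧
      IsPartialSchedule B T J'' σ'' ∧ (J''.image σ'').card ≤ (J'.image σ).card + 1 := by
  classical
  induction hn : (J'.filter fun m => ¬(m ∈ K ∧ σ m = ρ m)).card using Nat.strong_induction_on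
    generalizing J' σ with
  | _ n ih =>
  obtain ⟨j, hjK, hjJ'⟩ := exists_mem_notMem_of_card_lt_card hcard
  rcases load_lt_or_exists_disagree (σ := σ) hρ hjK hjJ' with hload | ⟨k, hkJ', hkσ, hk⟩
  · refine ⟨insert j J', Function.update σ j (ρ j), card_insert_of_notMem hjJ',
      hσ.insert_update hjJ' (hρ.1 j hjK) hload, ?_⟩
    rw [image_insert_update _ hjJ']
    exact card_insert_le _ _
  · set J₂ := insert j (J'.erase k)
    set σ₂ := Function.update σ j (σ k)
    have hjJ'k : j ∉ J'.erase k := fun h => hjJ' (mem_of_mem_erase h)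
    have hcard₂ : J₂.card = J'.card := by
      rw [card_insert_of_notMem hjJ'k, card_erase_add_one hkJ']
    have hdisagree : (J₂.filter fun m => ¬(m ∈ K ∧ σ₂ m = ρ m)) =
        (J'.filter fun m => ¬(m ∈ K ∧ σ m = ρ m)).erase k := by
      rw [filter_insert, if_neg (by simp [σ₂, hjK, hkσ]), ← filter_erase]
      exact filter_congr fun m hm => by
        rw [show σ₂ m = σ m from Function.update_of_ne (ne_of_mem_of_not_mem hm hjJ'k) _ _]
    have hk_mem : k ∈ J'.filter fun m => ¬(m ∈ K ∧ σ m = ρ m) :=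
      mem_filter.mpr ⟨hkJ', hk⟩
    obtain ⟨J'', σ'', hc, hsched, himage⟩ :=
      ih _ (hn ▸ card_erase_lt_of_mem hk_mem) (hσ.exchange hkJ' hjJ' (hkσ ▸ hρ.1 j hjK))
        (hcard₂ ▸ hcard) (by rw [hdisagree])
    have := card_le_card (image_exchange_subset (σ := σ) hkJ' hjJ')
    exact ⟨J'', σ'', hc.trans (by rw [hcard₂]), hsched, by omega⟩

theorem exists_extend_card_image_le (hρ : IsPartialSchedule B T K ρ)
    (hσ : IsPartialSchedule B T J' σ) (hcard : J'.card ≤ K.card) :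
    ∃ (J'' : Finset J) (σ'' : J → S), J''.card = K.card ∧ IsPartialSchedule B T J'' σ'' ∧
      (J''.image σ'').card ≤ (J'.image σ).card + (K.card - J'.card) := by
  induction hd : K.card - J'.card generalizing J' σ with
  | zero => exact ⟨J', σ, by omega, hσ, by omega⟩
  | succ d ih =>
    obtain ⟨J₁, σ₁, hc₁, hσ₁, himage₁⟩ := hρ.exists_augment hσ (by omega)
    obtain ⟨J'', σ'', hc, hsched, himage⟩ := ih hσ₁ (by omega) (by omega)
    exact ⟨J'', σ'', hc, hsched, by omega⟩

end IsPartialSchedule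

theorem max_jobs_plus_unused_slots_general
    {J S : Type*} [Fintype S] [DecidableEq S]
    (T : J → Finset S)
    (ι A : ℕ)
    (hι : IsGreatest {n : ℕ | ∃ J' : Finset J, Schedulable 2 T J' ∧ J'.card = n} ι)
    (hA : IsLeast {m : ℕ | ∃ (J' : Finset J) (σ : J → S),
        J'.card = ι ∧ IsPartialSchedule 2 T J' σ ∧ (J'.image σ).card = m} A) :
    IsGreatest {n : ℕ | ∃ (J' : Finset J) (σ : J → S),
        IsPartialSchedule 2 T J' σ ∧ J'.card + (Finset.univ \ J'.image σ).card = n}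
      (ι + Fintype.card S - A) := by
  constructor
  · obtain ⟨J₀, σ₀, hc₀, hσ₀, hA₀⟩ := hA.1
    have := card_le_univ (J₀.image σ₀)
    exact ⟨J₀, σ₀, hσ₀, by rw [card_univ_sdiff]; omega⟩
  · rintro n ⟨J', σ, hσ, rfl⟩
    obtain ⟨K, ⟨ρ, hρ⟩, hK⟩ := hι.1
    have hJ' : J'.card ≤ ι := hι.2 ⟨J', ⟨σ, hσ⟩, rfl⟩
    obtain ⟨L, τ, hL, hτ, himage⟩ := hρ.exists_extend_card_image_le hσ (hK ▸ hJ')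
    have hAτ : A ≤ (L.image τ).card := hA.2 ⟨L, τ, hL.trans hK, hτ, rfl⟩
    have := card_le_univ (J'.image σ)
    rw [card_univ_sdiff]
    omega

/-- For `B = 2`: let `ι` be the maximum cardinality of a schedulable subset, and
`A` the minimum active time over all schedules of subsets of cardinality `ι`.
Then the maximum over all subsets `J'` and schedules `σ` of `J'` of
`|J'| + |S \ range σ|` equals `ι + |S| - A`. -/
theorem max_jobs_plus_unused_slots
    {J S : Type*} [Fintype J] [Fintype S] [DecidableEq J] [DecidableEq S]
    (T : J → Finset S) (hT : ∀ j, (T j).Nonempty)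
    (ι A : ℕ)
    (hι : IsGreatest {n : ℕ | ∃ J' : Finset J, Schedulable 2 T J' ∧ J'.card = n} ι)
    (hA : IsLeast {m : ℕ | ∃ (J' : Finset J) (σ : J → S),
        J'.card = ι ∧ IsPartialSchedule 2 T J' σ ∧ (J'.image σ).card = m} A) :
    IsGreatest {n : ℕ | ∃ (J' : Finset J) (σ : J → S),
        IsPartialSchedule 2 T J' σ ∧ J'.card + (Finset.univ \ J'.image σ).card = n}
      (ι + Fintype.card S - A) :=
  max_jobs_plus_unused_slots_general T ι A hι hA
end

section
/- Let B ≥ 1 and consider a feasible unit-job interval instance in which, for every integer t, at most B jobs j have deadline d_j = t. Then there exists a schedule of minimum active time all of whose active slots belong to the set of deadlines {d_j : j ∈ J}. -/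
/-!
Among the schedules of minimum active time take one maximising `∑ j, σ j`. If an active slot
`t` were not a deadline, every job in it could move to `t + 1`. Let `c > t` be the first slot
with fewer than `B` jobs; the slots strictly between `t` and `c` are full. Move
`min (load t) (B - load c)` jobs from `t` to `t + 1` and push the overflow of each full slot one
slot further: since at most `B` jobs share a deadline, every overfull slot holds enough jobs that
may move right. The only possibly new active slot is `c`, and if `c` was idle then `t` has been
emptied, so the active time does not grow while `∑ j, σ j` increases.
-/

open Finset

/-- A schedule of a unit-job interval instance: each job `j` is assigned an integer
slot in `[r j, d j]`, with at most `B` jobs per slot. -/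
def IsIntSchedule {J : Type*} [Fintype J] (B : ℕ) (r d : J → ℤ) (σ : J → ℤ) : Prop :=
  (∀ j, r j ≤ σ j ∧ σ j ≤ d j) ∧
    ∀ t : ℤ, (Finset.univ.filter (fun j => σ j = t)).card ≤ B

section

variable {J : Type*}

section Piecewise

variable [DecidableEq J] {σ : J → ℤ} {S : Finset J} {q : ℤ}

theorem le_piecewise_const (h : ∀ j ∈ S, σ j ≤ q) : σ ≤ S.piecewise (fun _ => q) σ := fun j => by
  by_cases hj : j ∈ S <;> simp [hj, h j]

theorem piecewise_const_mem_Icc {r d : J → ℤ} (hσ : ∀ j, r j ≤ σ j ∧ σ j ≤ d j)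
    (hq : ∀ j ∈ S, r j ≤ q ∧ q ≤ d j) (j : J) :
    S.piecewise (fun _ => q) σ j ∈ Set.Icc (r j) (d j) := by
  by_cases hj : j ∈ S <;> simp [hj, hσ j, hq j]

end Piecewise

variable [Fintype J]

def slotLoad (σ : J → ℤ) (s : ℤ) : ℕ := #{j | σ j = s}

theorem slotLoad_pos_iff {σ : J → ℤ} {s : ℤ} : 0 < slotLoad σ s ↔ s ∈ univ.image σ := by
  simp [slotLoad, card_pos, filter_nonempty_iff]

theorem slotLoad_le_card_filter_lt_add {σ d : J → ℤ} (hσd : ∀ j, σ j ≤ d j) (p : ℤ) :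
    slotLoad σ p ≤ #{j | σ j = p ∧ p < d j} + slotLoad d p := by
  classical
  refine (card_le_card fun j hj => ?_).trans (card_union_le _ _)
  have := hσd j
  simp only [mem_filter, mem_univ, true_and, mem_union] at hj ⊢
  omega

section Move

variable [DecidableEq J] {σ : J → ℤ} {S : Finset J} {p q : ℤ}

theorem filter_piecewise_eq_sdiff {s : ℤ} (hs : s ≠ q) :
    univ.filter (fun j => S.piecewise (fun _ => q) σ j = s) =
      univ.filter (fun j => σ j = s) \ S := by
  ext j
  by_cases hj : j ∈ S <;> simp [hj, Ne.symm hs]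

theorem filter_piecewise_eq_union :
    univ.filter (fun j => S.piecewise (fun _ => q) σ j = q) =
      univ.filter (fun j => σ j = q) ∪ S := by
  ext j
  by_cases hj : j ∈ S <;> simp [hj]

theorem slotLoad_piecewise_of_ne {s : ℤ} (hS : ∀ j ∈ S, σ j = p) (hsp : s ≠ p) (hsq : s ≠ q) :
    slotLoad (S.piecewise (fun _ => q) σ) s = slotLoad σ s := by
  rw [slotLoad, filter_piecewise_eq_sdiff hsq, sdiff_eq_self_of_disjoint]
  · rfl
  · refine disjoint_left.2 fun j hj hjS => hsp ?_
    rw [← hS j hjS]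
    exact (mem_filter.1 hj).2.symm

theorem slotLoad_piecewise_source (hS : ∀ j ∈ S, σ j = p) (hpq : p ≠ q) :
    slotLoad (S.piecewise (fun _ => q) σ) p = slotLoad σ p - #S := by
  rw [slotLoad, filter_piecewise_eq_sdiff hpq, card_sdiff_of_subset]
  · rfl
  · exact fun j hj => by simpa using hS j hj

theorem slotLoad_piecewise_target (hS : ∀ j ∈ S, σ j = p) (hpq : p ≠ q) :
    slotLoad (S.piecewise (fun _ => q) σ) q = slotLoad σ q + #S := by
  rw [slotLoad, filter_piecewise_eq_union, card_union_of_disjoint]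
  · rfl
  · refine disjoint_left.2 fun j hj hjS => hpq ?_
    rw [← hS j hjS]
    exact (mem_filter.1 hj).2

theorem image_piecewise_subset {T : Finset ℤ} (hq : q ∈ T) (hσ : univ.image σ ⊆ T) :
    univ.image (S.piecewise (fun _ => q) σ) ⊆ T := by
  intro x hx
  obtain ⟨j, -, rfl⟩ := mem_image.1 hx
  by_cases hj : j ∈ S
  · simpa [hj] using hq
  · simpa [hj] using hσ (mem_image_of_mem σ (mem_univ j))

end Move

variable {B : ℕ} {r d : J → ℤ}

theorem isIntSchedule_of_slotLoad_le {σ : J → ℤ} {p : ℤ} (hσ : ∀ j, r j ≤ σ j ∧ σ j ≤ d j)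
    (hcap : ∀ s ≠ p, slotLoad σ s ≤ B) (hp : slotLoad σ p ≤ B) : IsIntSchedule B r d σ :=
  ⟨hσ, fun s => (eq_or_ne s p).elim (fun h => h ▸ hp) (hcap s)⟩

-- Slot `p` may be overfull; `hc` says that its excess `slotLoad σ p - B` fits into slot `c`.
theorem exists_schedule_of_overload (hB : 1 ≤ B) (hdl : ∀ t, slotLoad d t ≤ B)
    {σ : J → ℤ} {p c : ℤ} (hpc : p ≤ c) (hσ : ∀ j, r j ≤ σ j ∧ σ j ≤ d j)
    (hcap : ∀ s ≠ p, slotLoad σ s ≤ B) (hfull : ∀ s, p < s → s < c → slotLoad σ s = B)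
    (hc : slotLoad σ c + slotLoad σ p ≤ 2 * B) :
    ∃ τ, IsIntSchedule B r d τ ∧ σ ≤ τ ∧ univ.image τ ⊆ insert c (univ.image σ) := by
  classical
  obtain ⟨n, hn⟩ := Int.eq_ofNat_of_zero_le (sub_nonneg.2 hpc)
  induction n generalizing σ p with
  | zero =>
    obtain rfl : c = p := by omega
    exact ⟨σ, isIntSchedule_of_slotLoad_le hσ hcap (by omega), le_rfl, subset_insert _ _⟩
  | succ n ih =>
    by_cases hp : slotLoad σ p ≤ B
    · exact ⟨σ, isIntSchedule_of_slotLoad_le hσ hcap hp, le_rfl, subset_insert _ _⟩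
    -- at most `B` of the jobs in slot `p` are due at `p`, so the excess can move to `p + 1`
    obtain ⟨S, hSsub, hScard⟩ :=
      exists_subset_card_eq (show slotLoad σ p - B ≤ #{j | σ j = p ∧ p < d j} by
        have := slotLoad_le_card_filter_lt_add (fun j => (hσ j).2) p
        have := hdl p
        omega)
    have hS : ∀ j ∈ S, σ j = p ∧ p < d j := fun j hj => by simpa using hSsub hj
    have hSp : ∀ j ∈ S, σ j = p := fun j hj => (hS j hj).1
    set σ' := S.piecewise (fun _ => p + 1) σ
    have hload_ne : ∀ s, s ≠ p → s ≠ p + 1 → slotLoad σ' s = slotLoad σ s :=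
      fun s => slotLoad_piecewise_of_ne hSp
    have hload_p : slotLoad σ' p = B := by
      rw [slotLoad_piecewise_source hSp (by omega), hScard]
      omega
    have hload_p1 : slotLoad σ' (p + 1) = slotLoad σ (p + 1) + (slotLoad σ p - B) := by
      rw [slotLoad_piecewise_target hSp (by omega), hScard]
    have hσσ' : σ ≤ σ' := le_piecewise_const fun j hj => by have := hSp j hj; omega
    have hσ' : ∀ j, r j ≤ σ' j ∧ σ' j ≤ d j := piecewise_const_mem_Icc hσ fun j hj => by
      have := hσ j; have := hS j hj; omega
    obtain ⟨τ, hτ, hσ'τ, himg⟩ := ih (σ := σ') (p := p + 1) (by omega) hσ'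
      (fun s hs => by
        rcases eq_or_ne s p with rfl | hsp
        · omega
        · rw [hload_ne s hsp hs]; exact hcap s hsp)
      (fun s hs hsc => by rw [hload_ne s (by omega) (by omega)]; exact hfull s (by omega) hsc)
      (by
        rcases eq_or_ne n 0 with rfl | hn0
        · obtain rfl : c = p + 1 := by omega
          omega
        · rw [hload_ne c (by omega) (by omega), hload_p1, hfull (p + 1) (by omega) (by omega)]
          omega)
      (by omega)
    have hp1 : p + 1 ∈ insert c (univ.image σ) := by
      rcases eq_or_ne n 0 with rfl | hn0
      · exact mem_insert.2 (Or.inl (by omega))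
      · refine mem_insert_of_mem (slotLoad_pos_iff.1 ?_)
        rw [hfull (p + 1) (by omega) (by omega)]
        omega
    exact ⟨τ, hτ, hσσ'.trans hσ'τ, himg.trans (insert_subset (mem_insert_self _ _)
      (image_piecewise_subset hp1 (subset_insert _ _)))⟩

theorem Finset.card_le_card_of_subset_insert {α : Type*} [DecidableEq α] {s t : Finset α}
    {a b : α} (hts : t ⊆ insert a s) (hb : b ∈ s) (h : a ∈ s ∨ b ∉ t) : #t ≤ #s := by
  rcases h with ha | hbt
  · exact card_le_card (insert_eq_of_mem ha ▸ hts)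
  · calc #t ≤ #((insert a s).erase b) := card_le_card fun x hx =>
          mem_erase.2 ⟨fun h => hbt (h ▸ hx), hts hx⟩
      _ ≤ #s := by
          rw [card_erase_of_mem (mem_insert_of_mem hb)]
          have := card_insert_le a s
          omega

theorem exists_first_nonfull_slot_after (hB : 1 ≤ B) {σ : J → ℤ} (hcap : ∀ s, slotLoad σ s ≤ B) (t : ℤ) :
    ∃ c, t < c ∧ slotLoad σ c < B ∧ ∀ s, t < s → s < c → slotLoad σ s = B := by
  obtain ⟨c, ⟨htc, hcB⟩, hcmin⟩ := Int.exists_least_of_bdd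
    (P := fun z => t < z ∧ slotLoad σ z < B) ⟨t, fun z hz => hz.1.le⟩ (by
      obtain ⟨M, hM⟩ := (insert t (univ.image σ)).bddAbove
      have hMt : t ≤ M := hM (mem_insert_self _ _)
      have hM1 : M + 1 ∉ univ.image σ := fun h => by
        have := hM (mem_insert_of_mem h)
        omega
      rw [← slotLoad_pos_iff] at hM1
      exact ⟨M + 1, by omega, by omega⟩)
  exact ⟨c, htc, hcB, fun s hts hsc =>
    le_antisymm (hcap s) (not_lt.1 fun h => (hcmin s ⟨hts, h⟩).not_gt hsc)⟩

theorem exists_schedule_of_move (hdl : ∀ t, slotLoad d t ≤ B) {σ : J → ℤ}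
    (hσ : IsIntSchedule B r d σ) {S : Finset J} {t c : ℤ} (hS : ∀ j ∈ S, σ j = t ∧ t < d j)
    (hSne : S.Nonempty) (htc : t < c) (hfull : ∀ s, t < s → s < c → slotLoad σ s = B)
    (hSc : #S + slotLoad σ c ≤ B) :
    ∃ τ, IsIntSchedule B r d τ ∧ σ < τ ∧ univ.image τ ⊆ insert c (univ.image σ) ∧
      (#S = slotLoad σ t → t ∉ univ.image τ) := by
  classical
  have hcap : ∀ s, slotLoad σ s ≤ B := hσ.2
  have hB : 1 ≤ B := (card_pos.2 hSne).trans_le (by omega)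
  have hSt : ∀ j ∈ S, σ j = t := fun j hj => (hS j hj).1
  set σ₁ := S.piecewise (fun _ => t + 1) σ
  have hload_ne : ∀ s, s ≠ t → s ≠ t + 1 → slotLoad σ₁ s = slotLoad σ s :=
    fun s => slotLoad_piecewise_of_ne hSt
  have hload_t1 : slotLoad σ₁ (t + 1) = slotLoad σ (t + 1) + #S :=
    slotLoad_piecewise_target hSt (by omega)
  have hσσ₁ : σ < σ₁ := by
    obtain ⟨j, hj⟩ := hSne
    refine Pi.lt_def.2 ⟨le_piecewise_const fun i hi => by have := hSt i hi; omega, j, ?_⟩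
    simp [σ₁, hj, hSt j hj]
  have hσ₁ : ∀ j, r j ≤ σ₁ j ∧ σ₁ j ≤ d j := piecewise_const_mem_Icc hσ.1 fun j hj => by
    have := hσ.1 j; have := hS j hj; omega
  obtain ⟨τ, hτ, hσ₁τ, himg⟩ := exists_schedule_of_overload hB hdl (σ := σ₁) (p := t + 1)
    (c := c) (by omega) hσ₁
    (fun s hs => by
      rcases eq_or_ne s t with rfl | hst
      · rw [slotLoad_piecewise_source hSt (by omega)]
        exact (Nat.sub_le _ _).trans (hcap s)
      · rw [hload_ne s hst hs]; exact hcap s)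
    (fun s hs hsc => by rw [hload_ne s (by omega) (by omega)]; exact hfull s (by omega) hsc)
    (by
      rcases (Int.add_one_le_iff.2 htc).eq_or_lt with rfl | htc'
      · omega
      · rw [hload_ne c (by omega) (by omega), hload_t1, hfull (t + 1) (by omega) htc']
        omega)
  have ht1 : t + 1 ∈ insert c (univ.image σ) := by
    rcases (Int.add_one_le_iff.2 htc).eq_or_lt with rfl | htc'
    · exact mem_insert_self _ _
    · refine mem_insert_of_mem (slotLoad_pos_iff.1 ?_)
      rw [hfull (t + 1) (by omega) htc']
      omega
  refine ⟨τ, hτ, hσσ₁.trans_le hσ₁τ, himg.trans (insert_subset (mem_insert_self _ _)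
    (image_piecewise_subset ht1 (subset_insert _ _))), fun hSt_all hτt => ?_⟩
  have ht₁ : t ∉ univ.image σ₁ := by
    rw [← slotLoad_pos_iff, slotLoad_piecewise_source hSt (by omega), hSt_all]
    omega
  exact ht₁ ((mem_insert.1 (himg hτt)).resolve_left (by omega))

theorem exists_schedule_gt_of_not_deadline (hdl : ∀ t, slotLoad d t ≤ B) {σ : J → ℤ}
    (hσ : IsIntSchedule B r d σ) {t : ℤ} (ht : t ∈ univ.image σ) (hbad : ∀ j, d j ≠ t) :
    ∃ τ, IsIntSchedule B r d τ ∧ σ < τ ∧ #(univ.image τ) ≤ #(univ.image σ) := by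
  classical
  have hcap : ∀ s, slotLoad σ s ≤ B := hσ.2
  have hloadt : 0 < slotLoad σ t := slotLoad_pos_iff.2 ht
  obtain ⟨c, htc, hcB, hfull⟩ := exists_first_nonfull_slot_after (hloadt.trans_le (hcap t)) hcap t
  obtain ⟨S, hSsub, hScard⟩ :=
    exists_subset_card_eq (min_le_left (slotLoad σ t) (B - slotLoad σ c))
  have hS : ∀ j ∈ S, σ j = t ∧ t < d j := fun j hj => by
    have hjt : σ j = t := by simpa using hSsub hj
    exact ⟨hjt, lt_of_le_of_ne (hjt ▸ (hσ.1 j).2) (hbad j).symm⟩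
  obtain ⟨τ, hτ, hστ, himg, hτt⟩ :=
    exists_schedule_of_move hdl hσ hS (card_pos.1 (by omega)) htc hfull (by omega)
  refine ⟨τ, hτ, hστ, card_le_card_of_subset_insert himg ht ?_⟩
  -- if `c` was idle, all of slot `t` has moved
  refine (em (c ∈ univ.image σ)).imp id fun hc => hτt ?_
  rw [← slotLoad_pos_iff] at hc
  have := hcap t
  omega

theorem finite_setOf_isIntSchedule (B : ℕ) (r d : J → ℤ) :
    {σ : J → ℤ | IsIntSchedule B r d σ}.Finite :=
  (Set.Finite.pi fun j => Set.finite_Icc (r j) (d j)).subset fun _ hσ =>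
    Set.mem_univ_pi.2 fun j => hσ.1 j

end

theorem min_active_schedule_on_deadlines_general
    {J : Type*} [Fintype J]
    (B : ℕ) (r d : J → ℤ)
    (hdl : ∀ t : ℤ, (Finset.univ.filter (fun j => d j = t)).card ≤ B)
    (hfeas : ∃ σ : J → ℤ, IsIntSchedule B r d σ) :
    ∃ σ : J → ℤ, IsIntSchedule B r d σ ∧
      (∀ σ' : J → ℤ, IsIntSchedule B r d σ' →
        (Finset.univ.image σ).card ≤ (Finset.univ.image σ').card) ∧
      ∀ j : J, ∃ j' : J, σ j = d j' := by
  have hfin := finite_setOf_isIntSchedule B r d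
  obtain ⟨σ₀, hσ₀, hmin⟩ := Set.exists_min_image _ (fun σ => #(univ.image σ)) hfin hfeas
  obtain ⟨σ, ⟨hσ, hσopt⟩, hmax⟩ := Set.exists_max_image
    {σ | IsIntSchedule B r d σ ∧ #(univ.image σ) ≤ #(univ.image σ₀)} (fun σ => ∑ j, σ j)
    (hfin.subset fun _ hσ => hσ.1) ⟨σ₀, hσ₀, le_rfl⟩
  refine ⟨σ, hσ, fun σ' hσ' => hσopt.trans (hmin σ' hσ'), fun j => ?_⟩
  by_contra! hj
  obtain ⟨τ, hτ, hστ, hcard⟩ := exists_schedule_gt_of_not_deadline hdl hσ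
    (mem_image_of_mem σ (mem_univ j)) fun j' h => hj j' h.symm
  exact (hmax τ ⟨hτ, hcard.trans hσopt⟩).not_gt (Fintype.sum_strictMono hστ)

/-- If at most `B` jobs share any deadline and the instance is feasible, then some
schedule of minimum active time has all of its active slots among the deadlines. -/
theorem min_active_schedule_on_deadlines
    {J : Type*} [Fintype J] [DecidableEq J]
    (B : ℕ) (hB : 1 ≤ B) (r d : J → ℤ) (hrd : ∀ j, r j ≤ d j)
    (hdl : ∀ t : ℤ, (Finset.univ.filter (fun j => d j = t)).card ≤ B)
    (hfeas : ∃ σ : J → ℤ, IsIntSchedule B r d σ) :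
    ∃ σ : J → ℤ, IsIntSchedule B r d σ ∧
      (∀ σ' : J → ℤ, IsIntSchedule B r d σ' →
        (Finset.univ.image σ).card ≤ (Finset.univ.image σ').card) ∧
      ∀ j : J, ∃ j' : J, σ j = d j' :=
  min_active_schedule_on_deadlines_general B r d hdl hfeas
end

section
/- Let B ≥ 1 and consider a unit-job interval instance I. Suppose job x satisfies r_x < d_x and there exist B jobs j₁, …, j_B, pairwise distinct and distinct from x, with d_{j_i} = d_x and r_{j_i} ≥ r_x for all i. Let I' be the instance obtained from I by replacing the deadline of x by d_x − 1 (all other jobs unchanged). Then I is feasible if and only if I' is feasible, and when they are feasible, the minimum active time over schedules of I equals the minimum active time over schedules of I'. -/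
/-!
If `x` occupies the last slot `d x` in a schedule, that slot also holds at most `B - 1` of the
`B` jobs of `F`, so some `y ∈ F` sits strictly before `d x`. Swapping the slots of `x` and `y`
is again a schedule, because `y` may run at `d y = d x` and `x` may run wherever `y` could,
as `r x ≤ r y`. The swap keeps the set of used slots, hence the active time, and moves `x`
before `d x`; conversely, shrinking a deadline only removes schedules.
-/

open Finset

theorem Finset.card_filter_univ_comp_perm {α : Type*} [Fintype α] (p : α → Prop)
    [DecidablePred p] (e : Equiv.Perm α) :
    (univ.filter fun a => p (e a)).card = (univ.filter p).card :=
  card_nbij' e e.symm (by intro a; simp) (by intro a; simp) (by intro a; simp) (by intro a; simp)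

section

variable {J : Type*} [Fintype J] {B : ℕ} {r d : J → ℤ}

def activeTimes (B : ℕ) (r d : J → ℤ) [DecidableEq J] : Set ℕ :=
  {n | ∃ σ : J → ℤ, IsIntSchedule B r d σ ∧ (univ.image σ).card = n}

namespace IsIntSchedule

theorem mono_deadline {d' : J → ℤ} {σ : J → ℤ} (hσ : IsIntSchedule B r d σ) (hd : d ≤ d') :
    IsIntSchedule B r d' σ :=
  ⟨fun j => ⟨(hσ.1 j).1, (hσ.1 j).2.trans (hd j)⟩, hσ.2⟩

theorem exists_mem_lt_of_eq_deadline [DecidableEq J] {σ : J → ℤ}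
    (hσ : IsIntSchedule B r d σ) {x : J} (hσx : σ x = d x) {F : Finset J} (hFcard : F.card = B)
    (hxF : x ∉ F) (hFd : ∀ j ∈ F, d j = d x) : ∃ y ∈ F, σ y < d x := by
  by_contra! hF
  have hfull : insert x F ⊆ univ.filter fun j => σ j = d x := by
    intro j hj
    rcases mem_insert.1 hj with rfl | hjF
    · simpa using hσx
    · simpa using le_antisymm ((hσ.1 j).2.trans_eq (hFd j hjF)) (hF j hjF)
  have := (card_le_card hfull).trans (hσ.2 (d x))
  rw [card_insert_of_notMem hxF, hFcard] at this
  omega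

theorem swap [DecidableEq J] {σ : J → ℤ} (hσ : IsIntSchedule B r d σ) {x y : J}
    (hr : r x ≤ r y) (hd : d y = d x) (hσx : σ x = d x) (hσy : σ y < d x) :
    IsIntSchedule B r (Function.update d x (d x - 1)) (σ ∘ Equiv.swap x y) := by
  refine ⟨fun j => ?_, fun t => (card_filter_univ_comp_perm (σ · = t) _).trans_le (hσ.2 t)⟩
  rcases eq_or_ne j x with rfl | hjx
  · simp only [Function.comp_apply, Equiv.swap_apply_left, Function.update_self]
    exact ⟨hr.trans (hσ.1 y).1, by omega⟩
  rcases eq_or_ne j y with rfl | hjy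
  · simp only [Function.comp_apply, Equiv.swap_apply_right, Function.update_of_ne hjx, hd, hσx]
    exact ⟨(hσ.1 j).1.trans ((hσ.1 j).2.trans_eq hd), le_rfl⟩
  · simpa only [Function.comp_apply, Equiv.swap_apply_of_ne_of_ne hjx hjy,
      Function.update_of_ne hjx] using hσ.1 j

end IsIntSchedule

theorem exists_isIntSchedule_update_image_eq [DecidableEq J] {x : J} {F : Finset J}
    (hFcard : F.card = B) (hxF : x ∉ F) (hFd : ∀ j ∈ F, d j = d x) (hFr : ∀ j ∈ F, r x ≤ r j)
    {σ : J → ℤ} (hσ : IsIntSchedule B r d σ) :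
    ∃ σ' : J → ℤ, IsIntSchedule B r (Function.update d x (d x - 1)) σ' ∧
      univ.image σ' = univ.image σ := by
  rcases (hσ.1 x).2.lt_or_eq with hσx | hσx
  · refine ⟨σ, ⟨fun j => ?_, hσ.2⟩, rfl⟩
    rcases eq_or_ne j x with rfl | hjx
    · simpa using ⟨(hσ.1 j).1, by omega⟩
    · simpa [Function.update_of_ne hjx] using hσ.1 j
  obtain ⟨y, hyF, hσy⟩ := hσ.exists_mem_lt_of_eq_deadline hσx hFcard hxF hFd
  refine ⟨σ ∘ Equiv.swap x y, hσ.swap (hFr y hyF) (hFd y hyF) hσx hσy, ?_⟩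
  rw [← image_image, image_univ_equiv]

theorem activeTimes_update_eq [DecidableEq J] {x : J} {F : Finset J}
    (hFcard : F.card = B) (hxF : x ∉ F) (hFd : ∀ j ∈ F, d j = d x) (hFr : ∀ j ∈ F, r x ≤ r j) :
    activeTimes B r (Function.update d x (d x - 1)) = activeTimes B r d := by
  ext n
  constructor
  · rintro ⟨σ, hσ, rfl⟩
    exact ⟨σ, hσ.mono_deadline (update_le_self_iff.2 (by omega)), rfl⟩
  · rintro ⟨σ, hσ, rfl⟩
    obtain ⟨σ', hσ', himage⟩ := exists_isIntSchedule_update_image_eq hFcard hxF hFd hFr hσ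
    exact ⟨σ', hσ', by rw [himage]⟩

theorem nonempty_activeTimes_iff [DecidableEq J] :
    (activeTimes B r d).Nonempty ↔ ∃ σ : J → ℤ, IsIntSchedule B r d σ :=
  ⟨fun ⟨_, σ, hσ, _⟩ => ⟨σ, hσ⟩, fun ⟨σ, hσ⟩ => ⟨_, σ, hσ, rfl⟩⟩

end

theorem deadline_decrement_preserves_feasibility_and_min_active_time_general
    {J : Type*} [Fintype J] [DecidableEq J]
    (B : ℕ) (r d : J → ℤ)
    (x : J)
    (F : Finset J) (hFcard : F.card = B) (hxF : x ∉ F)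
    (hFd : ∀ j ∈ F, d j = d x) (hFr : ∀ j ∈ F, r x ≤ r j) :
    ((∃ σ : J → ℤ, IsIntSchedule B r d σ) ↔
      (∃ σ : J → ℤ, IsIntSchedule B r (Function.update d x (d x - 1)) σ)) ∧
    ((∃ σ : J → ℤ, IsIntSchedule B r d σ) →
      sInf {n : ℕ | ∃ σ : J → ℤ, IsIntSchedule B r d σ ∧ (Finset.univ.image σ).card = n} =
        sInf {n : ℕ | ∃ σ : J → ℤ,
          IsIntSchedule B r (Function.update d x (d x - 1)) σ ∧
          (Finset.univ.image σ).card = n}) := by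
  have hactive := activeTimes_update_eq hFcard hxF hFd hFr
  refine ⟨?_, fun _ => congrArg sInf hactive.symm⟩
  rw [← nonempty_activeTimes_iff, ← nonempty_activeTimes_iff, hactive]

/-- Decrementing the deadline of a job `x` that has `B` other jobs with the same
deadline and no earlier release times preserves feasibility and the minimum
active time. -/
theorem deadline_decrement_preserves_feasibility_and_min_active_time
    {J : Type*} [Fintype J] [DecidableEq J]
    (B : ℕ) (hB : 1 ≤ B) (r d : J → ℤ) (hrd : ∀ j, r j ≤ d j)
    (x : J) (hx : r x < d x)
    (F : Finset J) (hFcard : F.card = B) (hxF : x ∉ F)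
    (hFd : ∀ j ∈ F, d j = d x) (hFr : ∀ j ∈ F, r x ≤ r j) :
    ((∃ σ : J → ℤ, IsIntSchedule B r d σ) ↔
      (∃ σ : J → ℤ, IsIntSchedule B r (Function.update d x (d x - 1)) σ)) ∧
    ((∃ σ : J → ℤ, IsIntSchedule B r d σ) →
      sInf {n : ℕ | ∃ σ : J → ℤ, IsIntSchedule B r d σ ∧ (Finset.univ.image σ).card = n} =
        sInf {n : ℕ | ∃ σ : J → ℤ,
          IsIntSchedule B r (Function.update d x (d x - 1)) σ ∧
          (Finset.univ.image σ).card = n}) :=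
  deadline_decrement_preserves_feasibility_and_min_active_time_general B r d x F hFcard hxF hFd hFr
end
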